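/- arXiv:2402.06157 — 2 statements merged into one kernel-verified Lean document; each statement's English description precedes it below -/
import Mathlib

section
/- Let G be a finite solvable group whose Sylow 2-subgroups are generalized quaternion, with a normal 2-complement Q, and suppose Z(P) ≤ C_P(Q) for P a Sylow 2-subgroup. Then 2 divides |K(G)|. -/
/-- `K(G)`: the set of elements `x` such that `⟨x, g⟩` is cyclic for all `g ∈ G`
(the universal vertices of the enhanced power graph together with the identity). -/
def KSet (G : Type*) [Group G] : Set G :=
  {x | ∀ g : G, IsCyclic (Subgroup.closure ({x, g} : Set G))}

/-- A group is generalized quaternion if it is isomorphic to `Q_{2^n}` for some `n ≥ 3`. -/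
def IsGeneralizedQuaternion (Q : Type*) [Group Q] : Prop :=
  ∃ n : ℕ, 3 ≤ n ∧ Nonempty (Q ≃* QuaternionGroup (2 ^ (n - 2)))

/-- The enhanced power graph of `G`: vertices are nonidentity elements, with an edge
between distinct `x` and `y` iff `⟨x, y⟩` is cyclic. -/
def enhancedPowerGraph (G : Type*) [Group G] : SimpleGraph {g : G // g ≠ 1} where
  Adj x y := x ≠ y ∧ IsCyclic (Subgroup.closure ({x.1, y.1} : Set G))
  symm := ⟨fun x y => by
    rintro ⟨hne, hc⟩
    exact ⟨hne.symm, by rwa [Set.pair_comm]⟩⟩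
  loopless := ⟨fun x => by simp⟩

section Aux
open Subgroup Pointwise

open QuaternionGroup in
lemma quat_sq_eq_one {m : ℕ} [NeZero m] (x : QuaternionGroup m) (hx : x ^ 2 = 1) :
    x = 1 ∨ x = QuaternionGroup.a (m : ZMod (2 * m)) := by
  cases x with
  | xa i =>
      exfalso
      have h4 : orderOf (xa i : QuaternionGroup m) = 4 := QuaternionGroup.orderOf_xa i
      have h2 : orderOf (xa i : QuaternionGroup m) ∣ 2 := orderOf_dvd_of_pow_eq_one hx
      rw [h4] at h2
      norm_num at h2
  | a i =>
      have h2 : (a i : QuaternionGroup m) ^ 2 = a (i + i) := by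
        rw [pow_two, QuaternionGroup.a_mul_a]
      rw [h2, QuaternionGroup.one_def] at hx
      have hii : i + i = 0 := by injection hx
      have hv : (2 * m) ∣ (i.val + i.val) := by
        have hcast : ((i.val + i.val : ℕ) : ZMod (2 * m)) = 0 := by
          push_cast [ZMod.natCast_val, ZMod.cast_id]
          exact hii
        exact (ZMod.natCast_eq_zero_iff _ _).mp hcast
      have hmv : m ∣ i.val := by
        rcases hv with ⟨c, hc⟩
        rw [mul_assoc] at hc
        exact ⟨c, by omega⟩
      have hlt : i.val < 2 * m := i.val_lt
      have hval : i.val = 0 ∨ i.val = m := by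
        rcases hmv with ⟨c, hc⟩
        rcases c with _ | _ | c
        · omega
        · omega
        · exfalso; nlinarith [Nat.pos_of_ne_zero (NeZero.ne m)]
      have hback : ((i.val : ℕ) : ZMod (2 * m)) = i := by
        rw [ZMod.natCast_val, ZMod.cast_id]
      rcases hval with h | h
      · left
        rw [QuaternionGroup.one_def]
        congr 1
        rw [← hback, h, Nat.cast_zero]
      · right
        congr 1
        rw [← hback, h]

/-- In a generalized quaternion group, involutions are unique. -/
lemma IsGeneralizedQuaternion.involution_unique {H : Type*} [Group H]
    (h : IsGeneralizedQuaternion H) {x y : H} (hx2 : x ^ 2 = 1) (hx1 : x ≠ 1)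
    (hy2 : y ^ 2 = 1) (hy1 : y ≠ 1) : x = y := by
  obtain ⟨n, hn, ⟨e⟩⟩ := h
  haveI : NeZero (2 ^ (n - 2)) := ⟨(Nat.pos_of_ne_zero (by positivity)).ne'⟩
  have hex : e x = 1 ∨ e x = QuaternionGroup.a _ :=
    quat_sq_eq_one (e x) (by rw [← map_pow, hx2, map_one])
  have hey : e y = 1 ∨ e y = QuaternionGroup.a _ :=
    quat_sq_eq_one (e y) (by rw [← map_pow, hy2, map_one])
  have hx1' : e x ≠ 1 := fun h' => hx1 (by simpa using congrArg e.symm h')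
  have hy1' : e y ≠ 1 := fun h' => hy1 (by simpa using congrArg e.symm h')
  have : e x = e y := by
    rcases hex with h' | h'
    · exact absurd h' hx1'
    · rcases hey with h'' | h''
      · exact absurd h'' hy1'
      · rw [h', h'']
  simpa using congrArg e.symm this

lemma isCyclic_zpowers {G : Type*} [Group G] (g : G) : IsCyclic ↥(zpowers g) :=
  ⟨⟨⟨g, mem_zpowers g⟩, fun x => by
    obtain ⟨k, hk⟩ := x.2
    exact ⟨k, Subtype.ext (by simpa using hk)⟩⟩⟩

lemma isCyclic_of_le_zpowers {G : Type*} [Group G] {H : Subgroup G} {c : G}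
    (h : H ≤ zpowers c) : IsCyclic ↥H :=
  haveI := _root_.isCyclic_zpowers c
  Subgroup.isCyclic_of_le h

lemma exists_le_zpowers {G : Type*} [Group G] {H : Subgroup G} (h : IsCyclic ↥H) :
    ∃ c ∈ H, H ≤ zpowers c := by
  obtain ⟨⟨c, hc⟩, hgen⟩ := h
  refine ⟨c, hc, fun a ha => ?_⟩
  obtain ⟨k, hk⟩ := hgen ⟨a, ha⟩
  exact ⟨k, by simpa using congrArg (Subtype.val) hk⟩


end Aux

open Subgroup Pointwise in
/-- if `G` is finite solvable with generalized quaternion Sylow `2`-subgroup `P`,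
a normal `2`-complement `Q`, and `Z(P) ≤ C_P(Q)`, then `2 ∣ |K(G)|`. -/
theorem two_dvd_KSet_of_normal_two_complement (G : Type*) [Group G] [Finite G]
    (hs : IsSolvable G) (P : Sylow 2 G)
    (hP : IsGeneralizedQuaternion (P : Subgroup G))
    (Q : Subgroup G) (hQn : Q.Normal) (hQodd : Odd (Nat.card Q))
    (hQi : ∃ k : ℕ, Q.index = 2 ^ k)
    (hc : (Subgroup.center (P : Subgroup G)).map (P : Subgroup G).subtype ≤
      Subgroup.centralizer (Q : Set G)) :
    2 ∣ Nat.card ↥(KSet G) := by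
  haveI : Fact (Nat.Prime 2) := ⟨Nat.prime_two⟩
  -- ↥P is a nontrivial 2-group
  have hPp : IsPGroup 2 ↥(P : Subgroup G) := P.2
  haveI : Nontrivial ↥(P : Subgroup G) := by
    obtain ⟨n, hn, ⟨e⟩⟩ := hP
    haveI : NeZero (2 ^ (n - 2)) := ⟨(Nat.pos_of_ne_zero (by positivity)).ne'⟩
    exact e.toEquiv.nontrivial
  -- get a central involution z of P
  haveI hcnt : Nontrivial (center ↥(P : Subgroup G)) := hPp.center_nontrivial
  have hcpg : IsPGroup 2 ↥(center ↥(P : Subgroup G)) := hPp.to_subgroup _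
  have h2c : 2 ∣ Nat.card ↥(center ↥(P : Subgroup G)) := by
    obtain ⟨n, hn0, hn⟩ := hcpg.nontrivial_iff_card.mp hcnt
    exact hn ▸ dvd_pow_self 2 hn0.ne'
  obtain ⟨y, hy⟩ := exists_prime_orderOf_dvd_card' (G := ↥(center ↥(P : Subgroup G))) 2 h2c
  set z : G := ((y : ↥(P : Subgroup G)) : G) with hzdef
  have hy2 : y ^ 2 = 1 := by
    have := pow_orderOf_eq_one y; rwa [hy] at this
  have hy1 : y ≠ 1 := by
    intro h; rw [h, orderOf_one] at hy; norm_num at hy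
  have hz2 : z ^ 2 = 1 := by
    have := congrArg (fun w : ↥(center ↥(P : Subgroup G)) => ((w : ↥(P : Subgroup G)) : G)) hy2
    simpa using this
  have hz1 : z ≠ 1 := by
    intro h
    exact hy1 (Subtype.ext (Subtype.ext h))
  have hzP : z ∈ (P : Subgroup G) := (y : ↥(P : Subgroup G)).2
  -- z commutes with P
  have hzPc : ∀ p ∈ (P : Subgroup G), z * p = p * z := by
    intro p hp
    have := (Subgroup.mem_center_iff.mp y.2) ⟨p, hp⟩
    exact congrArg Subtype.val this |>.symm
  -- z centralizes Q
  have hzQc : z ∈ centralizer (Q : Set G) := by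
    apply hc
    exact ⟨y.1, y.2, rfl⟩
  -- Q ⊔ P = ⊤
  obtain ⟨k, hk⟩ := hQi
  have hQ0 : Nat.card ↥Q ≠ 0 := Nat.card_pos.ne'
  have hcardG : Nat.card ↥Q * 2 ^ k = Nat.card G := by rw [← hk]; exact Q.card_mul_index
  have hPcard : Nat.card ↥(P : Subgroup G) = 2 ^ k := by
    rw [P.card_eq_multiplicity]
    congr 1
    have : (Nat.card G).factorization 2 = (Nat.card ↥Q * 2 ^ k).factorization 2 := by
      rw [hcardG]
    rw [this, Nat.factorization_mul hQ0 (by positivity), Nat.Prime.factorization_pow Nat.prime_two]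
    have hodd : ¬ (2 ∣ Nat.card ↥Q) := by
      have := Nat.odd_iff.mp hQodd; omega
    simp [Nat.factorization_eq_zero_of_not_dvd hodd]
  have hcop : (Nat.card ↥Q).Coprime (Nat.card ↥(P : Subgroup G)) := by
    rw [hPcard]
    exact Nat.Coprime.pow_right _ (Nat.coprime_two_right.mpr hQodd)
  have htop : Q ⊔ (P : Subgroup G) = ⊤ := by
    apply Subgroup.eq_top_of_card_eq
    have h1 : Nat.card ↥Q ∣ Nat.card ↥(Q ⊔ (P : Subgroup G)) := card_dvd_of_le le_sup_left
    have h2 : Nat.card ↥(P : Subgroup G) ∣ Nat.card ↥(Q ⊔ (P : Subgroup G)) :=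
      card_dvd_of_le le_sup_right
    have h3 : Nat.card ↥Q * Nat.card ↥(P : Subgroup G) ∣ Nat.card ↥(Q ⊔ (P : Subgroup G)) :=
      hcop.mul_dvd_of_dvd_of_dvd h1 h2
    have h4 : Nat.card ↥(Q ⊔ (P : Subgroup G)) ∣ Nat.card G :=
      card_subgroup_dvd_card _
    have h5 : Nat.card ↥Q * Nat.card ↥(P : Subgroup G) = Nat.card G := by
      rw [hPcard]; exact hcardG
    exact Nat.dvd_antisymm h4 (h5 ▸ h3)
  -- z is central in G
  have hzc : ∀ g : G, z * g = g * z := by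
    have hle : Q ⊔ (P : Subgroup G) ≤ centralizer {z} := by
      refine sup_le ?_ ?_
      · intro q hq
        rw [mem_centralizer_iff]
        intro m hm
        rw [Set.mem_singleton_iff] at hm
        subst hm
        exact ((Subgroup.mem_centralizer_iff.mp hzQc) q hq).symm
      · intro p hp
        rw [mem_centralizer_iff]
        intro m hm
        rw [Set.mem_singleton_iff] at hm
        subst hm
        exact hzPc p hp
    intro g
    have hg : g ∈ centralizer {z} := hle (htop ▸ mem_top g)
    exact (Subgroup.mem_centralizer_iff.mp hg) z rfl
  -- every involution of G equals z
  have huniq : ∀ t : G, t ^ 2 = 1 → t ≠ 1 → t = z := by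
    intro t ht2 ht1
    have hot : orderOf t = 2 := orderOf_eq_prime ht2 ht1
    have hpt : IsPGroup 2 ↥(zpowers t) :=
      IsPGroup.of_card (by rw [Nat.card_zpowers, hot, pow_one])
    obtain ⟨P', hP'⟩ := hpt.exists_le_sylow
    obtain ⟨g, hg⟩ := MulAction.exists_smul_eq G P P'
    -- z ∈ P'
    have hzP' : z ∈ (P' : Subgroup G) := by
      rw [← hg]
      change z ∈ (MulAut.conj g • (P : Subgroup G))
      rw [Subgroup.mem_pointwise_smul_iff_inv_smul_mem]
      have : (MulAut.conj g)⁻¹ • z = g⁻¹ * z * g := by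
        simp [MulAut.smul_def, MulAut.conj_inv_apply]
      rw [this]
      have : g⁻¹ * z * g = z := by
        rw [← hzc g⁻¹, mul_assoc, inv_mul_cancel, mul_one]
      rw [this]
      exact hzP
    have htP' : t ∈ (P' : Subgroup G) := hP' (mem_zpowers t)
    -- P' is generalized quaternion
    have hP'gq : IsGeneralizedQuaternion ↥(P' : Subgroup G) := by
      obtain ⟨n, hn, ⟨e⟩⟩ := hP
      refine ⟨n, hn, ⟨?_⟩⟩
      have he : ↥(P' : Subgroup G) ≃* ↥(P : Subgroup G) := by
        rw [← hg]
        exact (Subgroup.equivSMul (MulAut.conj g) (P : Subgroup G)).symm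
      exact he.trans e
    have := hP'gq.involution_unique (x := (⟨t, htP'⟩ : ↥(P' : Subgroup G)))
      (y := (⟨z, hzP'⟩ : ↥(P' : Subgroup G)))
      (by ext; simpa using ht2) (by simp [Subtype.ext_iff]; exact ht1)
      (by ext; simpa using hz2) (by simp [Subtype.ext_iff]; exact hz1)
    simpa [Subtype.ext_iff] using this
  -- z ∈ K(G)
  have hzK : z ∈ KSet G := by
    intro g
    rcases Nat.even_or_odd (orderOf g) with he | ho
    · -- even order: z ∈ ⟨g⟩
      have h2g : 2 ∣ Nat.card ↥(zpowers g) := by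
        rw [Nat.card_zpowers]; exact he.two_dvd
      obtain ⟨w, hw⟩ := exists_prime_orderOf_dvd_card' (G := ↥(zpowers g)) 2 h2g
      have hw2 : ((w : G)) ^ 2 = 1 := by
        have : w ^ 2 = 1 := by rw [← hw]; exact pow_orderOf_eq_one w
        exact congrArg Subtype.val this
      have hw1 : (w : G) ≠ 1 := by
        intro h
        have : w = 1 := Subtype.ext h
        rw [this, orderOf_one] at hw; norm_num at hw
      have hwz : (w : G) = z := huniq _ hw2 hw1
      have hzg : z ∈ zpowers g := hwz ▸ w.2
      have hle : closure ({z, g} : Set G) ≤ zpowers g := by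
        rw [closure_le]
        rintro x (rfl | rfl)
        · exact hzg
        · exact mem_zpowers _
      exact isCyclic_of_le_zpowers hle
    · -- odd order: ⟨z, g⟩ = ⟨z*g⟩
      have hcomm : Commute z g := hzc g
      have hn0 : orderOf g ≠ 0 := by
        have : IsOfFinOrder g := isOfFinOrder_of_finite g
        exact (orderOf_pos g).ne'
      have hzpow : (z * g) ^ orderOf g = z := by
        rw [hcomm.mul_pow, pow_orderOf_eq_one, mul_one]
        obtain ⟨m, hm⟩ := ho
        rw [hm, pow_add, pow_mul, hz2, one_pow, one_mul, pow_one]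
      have hzmem : z ∈ zpowers (z * g) := by
        rw [mem_zpowers_iff]
        exact ⟨orderOf g, by rw [zpow_natCast, hzpow]⟩
      have hgmem : g ∈ zpowers (z * g) := by
        have h2 := mul_mem (inv_mem hzmem) (mem_zpowers (z * g))
        rwa [inv_mul_cancel_left] at h2
      have hle : closure ({z, g} : Set G) ≤ zpowers (z * g) := by
        rw [closure_le]
        rintro x (rfl | rfl)
        · exact hzmem
        · exact hgmem
      exact isCyclic_of_le_zpowers hle
  -- K(G) is closed under multiplication by z
  have hclosed : ∀ x ∈ KSet G, z * x ∈ KSet G := by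
    intro x hx g
    obtain ⟨c, hcmem, hcle⟩ := exists_le_zpowers (hx g)
    have hxc : x ∈ zpowers c := hcle (subset_closure (by simp))
    have hgc : g ∈ zpowers c := hcle (subset_closure (by simp))
    obtain ⟨d, hdmem, hdle⟩ := exists_le_zpowers (hzK c)
    have hzd : z ∈ zpowers d := hdle (subset_closure (by simp))
    have hcd : c ∈ zpowers d := hdle (subset_closure (by simp))
    have hcled : zpowers c ≤ zpowers d := zpowers_le.mpr hcd
    have hle : closure ({z * x, g} : Set G) ≤ zpowers d := by
      rw [closure_le]
      rintro w (rfl | rfl)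
      · exact mul_mem hzd (hcled hxc)
      · exact hcled hgc
    exact isCyclic_of_le_zpowers hle
  -- counting: ⟨z⟩ acts freely on K(G)
  have hoz : orderOf z = 2 := orderOf_eq_prime hz2 hz1
  letI : MulAction ↥(zpowers z) ↥(KSet G) :=
    { smul := fun h x => ⟨(h : G) * (x : G), by
        obtain ⟨j, hj⟩ := h.2
        have hz2' : z ^ (2 : ℤ) = 1 := by
          rw [show (2 : ℤ) = ((2 : ℕ) : ℤ) from rfl, zpow_natCast, hz2]
        rcases Int.even_or_odd j with ⟨m, hm⟩ | ⟨m, hm⟩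
        · have h1 : (h : G) = 1 := by
            rw [← hj]
            show z ^ j = 1
            rw [hm, ← two_mul, zpow_mul, hz2', one_zpow]
          rw [h1, one_mul]; exact x.2
        · have h1 : (h : G) = z := by
            rw [← hj]
            show z ^ j = z
            rw [hm, zpow_add, zpow_mul, hz2', one_zpow, one_mul, zpow_one]
          rw [h1]; exact hclosed _ x.2⟩
      one_smul := fun x => Subtype.ext (one_mul _)
      mul_smul := fun a b x => Subtype.ext (mul_assoc _ _ _) }
  have hpg : IsPGroup 2 ↥(zpowers z) :=
    IsPGroup.of_card (by rw [Nat.card_zpowers, hoz, pow_one])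
  have hmod := hpg.card_modEq_card_fixedPoints (↥(KSet G))
  have hempty : IsEmpty ↥(MulAction.fixedPoints ↥(zpowers z) ↥(KSet G)) := by
    refine ⟨fun ⟨x, hxf⟩ => ?_⟩
    have := hxf (⟨z, mem_zpowers z⟩ : ↥(zpowers z))
    have hzx : z * (x : G) = (x : G) := congrArg Subtype.val this
    exact hz1 (by
      have := mul_right_cancel (b := (x : G)) (a := z) (c := 1) (by rw [one_mul]; exact hzx)
      exact this)
  have hcard0 : Nat.card ↥(MulAction.fixedPoints ↥(zpowers z) ↥(KSet G)) = 0 :=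
    Nat.card_of_isEmpty
  rw [hcard0] at hmod
  exact (Nat.modEq_zero_iff_dvd).mp hmod
end

section
/- Let p and q be distinct primes and let G be a finite non-cyclic {p,q}-group. Then diam(Δ(G)) = 2 if and only if G has a unique subgroup of order p that is central, or a unique subgroup of order q that is central. -/
section Helpers

variable {G : Type*} [Group G]

lemma closure_pair_le' {x y : G} {H : Subgroup G} (hx : x ∈ H) (hy : y ∈ H) :
    Subgroup.closure ({x, y} : Set G) ≤ H := by
  rw [Subgroup.closure_le]
  rintro a (rfl | rfl) <;> simpa

lemma isCyclic_closure_pair_of_mem' {x y : G} {H : Subgroup G} (hH : IsCyclic H)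
    (hx : x ∈ H) (hy : y ∈ H) : IsCyclic (Subgroup.closure ({x, y} : Set G)) := by
  haveI := hH
  exact Subgroup.isCyclic_of_le (closure_pair_le' hx hy)

lemma isCyclic_zpowers' (x : G) : IsCyclic (Subgroup.zpowers x) := by
  constructor
  refine ⟨⟨x, Subgroup.mem_zpowers x⟩, fun y => ?_⟩
  obtain ⟨k, hk⟩ := Subgroup.mem_zpowers_iff.mp y.2
  exact Subgroup.mem_zpowers_iff.mpr ⟨k, Subtype.ext (by simpa using hk)⟩

lemma IsCyclic.exists_zpowers_eq' {H : Subgroup G} (hH : IsCyclic H) :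
    ∃ g ∈ H, Subgroup.zpowers g = H := by
  obtain ⟨g, hg⟩ := hH.exists_generator
  refine ⟨g, g.2, le_antisymm (Subgroup.zpowers_le.mpr g.2) fun x hx => ?_⟩
  obtain ⟨n, hn⟩ := hg ⟨x, hx⟩
  refine Subgroup.mem_zpowers_iff.mpr ⟨n, ?_⟩
  have := congrArg (Subtype.val : H → G) hn
  simpa using this

lemma mem_zpowers_of_orderOf_eq_cyclic {C : Type*} [Group C] [Finite C] [IsCyclic C]
    {r : ℕ} (hr : r.Prime) {a b : C} (ha : orderOf a = r) (hb : orderOf b = r) :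
    b ∈ Subgroup.zpowers a := by
  classical
  haveI : Fintype C := Fintype.ofFinite C
  set S : Finset C := Finset.univ.filter (fun c => c ^ r = 1) with hS
  have hScard : S.card ≤ r := by
    simpa [hS] using IsCyclic.card_pow_eq_one_le (α := C) (n := r) hr.pos
  set T : Finset C := ((Subgroup.zpowers a : Subgroup C) : Set C).toFinset with hT
  have hTS : T ⊆ S := by
    intro x hx
    rw [hT, Set.mem_toFinset] at hx
    have : x ^ r = 1 := by
      have : orderOf x ∣ r := ha ▸ orderOf_dvd_of_mem_zpowers hx
      exact orderOf_dvd_iff_pow_eq_one.mp this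
    simp [hS, this]
  have hTcard : T.card = r := by
    rw [hT, Set.toFinset_card]
    simpa using (Fintype.card_zpowers (x := a)).trans ha
  have hTeq : T = S := Finset.eq_of_subset_of_card_le hTS (by omega)
  have hbS : b ∈ S := by
    have : b ^ r = 1 := by rw [← hb]; exact pow_orderOf_eq_one b
    simp [hS, this]
  rw [← hTeq, hT, Set.mem_toFinset] at hbS
  exact hbS

lemma mem_zpowers_of_orderOf_eq_mem [Finite G] {M : Subgroup G} (hM : IsCyclic M)
    {r : ℕ} (hr : r.Prime) {a b : G} (haM : a ∈ M) (hbM : b ∈ M)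
    (ha : orderOf a = r) (hb : orderOf b = r) : b ∈ Subgroup.zpowers a := by
  haveI := hM
  have h := mem_zpowers_of_orderOf_eq_cyclic (C := M) hr
    (a := ⟨a, haM⟩) (b := ⟨b, hbM⟩) (by simpa using ha) (by simpa using hb)
  obtain ⟨n, hn⟩ := Subgroup.mem_zpowers_iff.mp h
  refine Subgroup.mem_zpowers_iff.mpr ⟨n, ?_⟩
  have := congrArg (Subtype.val : M → G) hn
  simpa using this

lemma isCyclic_of_forall_pair' [Finite G]
    (h : ∀ x y : G, IsCyclic (Subgroup.closure ({x, y} : Set G))) : IsCyclic G := by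
  classical
  haveI : Fintype G := Fintype.ofFinite G
  have key : ∀ s : Finset G, ∃ g : G, Subgroup.closure (s : Set G) ≤ Subgroup.zpowers g := by
    intro s
    induction s using Finset.induction_on with
    | empty => exact ⟨1, by simp⟩
    | @insert a s _ ih =>
      obtain ⟨g, hg⟩ := ih
      obtain ⟨k, _, hk⟩ := (h a g).exists_zpowers_eq'
      have ha' : a ∈ Subgroup.closure ({a, g} : Set G) :=
        Subgroup.subset_closure (by simp)
      have hg' : g ∈ Subgroup.closure ({a, g} : Set G) :=
        Subgroup.subset_closure (by simp)
      have hle : Subgroup.closure ((s : Finset G) : Set G) ≤ Subgroup.closure ({a, g} : Set G) :=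
        le_trans hg (Subgroup.zpowers_le.mpr hg')
      refine ⟨k, ?_⟩
      rw [hk, Finset.coe_insert, Subgroup.closure_le]
      intro x hx
      rcases Set.mem_insert_iff.mp hx with rfl | hx
      · exact ha'
      · exact hle (Subgroup.subset_closure hx)
  obtain ⟨g, hg⟩ := key Finset.univ
  refine ⟨⟨g, fun x => hg ?_⟩⟩
  simp [Subgroup.subset_closure]

lemma universal_of_unique_central [Finite G] {r : ℕ} (hr : r.Prime) (Z : Subgroup G)
    (hcard : Nat.card Z = r) (hcent : Z ≤ Subgroup.center G)
    (huniq : ∀ X : Subgroup G, Nat.card X = r → X = Z) :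
    ∃ z : G, z ≠ 1 ∧ ∀ x : G, IsCyclic (Subgroup.closure ({x, z} : Set G)) := by
  haveI : Fact r.Prime := ⟨hr⟩
  have hZc : IsCyclic Z := isCyclic_of_prime_card hcard
  obtain ⟨z, hzZ, hz⟩ := hZc.exists_zpowers_eq'
  have hord : orderOf z = r := by rw [← Nat.card_zpowers, hz, hcard]
  have hz1 : z ≠ 1 := by
    intro h
    rw [h, orderOf_one] at hord
    exact hr.one_lt.ne' hord.symm
  have hzc : ∀ g : G, Commute g z := fun g => Subgroup.mem_center_iff.mp (hcent hzZ) g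
  refine ⟨z, hz1, fun x => ?_⟩
  by_cases hdvd : r ∣ orderOf x
  · set d := orderOf x with hd
    have hx0 : d ≠ 0 := (orderOf_pos x).ne'
    have hyord : orderOf (x ^ (d / r)) = r := by
      rw [orderOf_pow, ← hd, Nat.gcd_eq_right (Nat.div_dvd_of_dvd hdvd),
        Nat.div_div_self hdvd hx0]
    have hZeq : Subgroup.zpowers (x ^ (d / r)) = Z :=
      huniq _ (by rw [Nat.card_zpowers, hyord])
    have hzmem : z ∈ Subgroup.zpowers x := by
      have h1 : z ∈ Subgroup.zpowers (x ^ (d / r)) := hZeq ▸ hzZ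
      have h2 : Subgroup.zpowers (x ^ (d / r)) ≤ Subgroup.zpowers x :=
        Subgroup.zpowers_le.mpr (Subgroup.pow_mem _ (Subgroup.mem_zpowers x) _)
      exact h2 h1
    exact isCyclic_closure_pair_of_mem' (isCyclic_zpowers' x) (Subgroup.mem_zpowers x) hzmem
  · have hco : (orderOf x).Coprime r := (hr.coprime_iff_not_dvd.mpr hdvd).symm
    obtain ⟨e1, he1x, he1z⟩ := Nat.chineseRemainder (by rw [← hord] at hco; exact hco) 1 0
    obtain ⟨e2, he2x, he2z⟩ := Nat.chineseRemainder (by rw [← hord] at hco; exact hco) 0 1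
    have hxe1 : x ^ e1 = x := by
      have h := (pow_eq_pow_iff_modEq (x := x)).mpr he1x
      rwa [pow_one] at h
    have hze1 : z ^ e1 = 1 := by
      have h := (pow_eq_pow_iff_modEq (x := z)).mpr he1z
      rwa [pow_zero] at h
    have hxe2 : x ^ e2 = 1 := by
      have h := (pow_eq_pow_iff_modEq (x := x)).mpr he2x
      rwa [pow_zero] at h
    have hze2 : z ^ e2 = z := by
      have h := (pow_eq_pow_iff_modEq (x := z)).mpr he2z
      rwa [pow_one] at h
    have hxmem : x ∈ Subgroup.zpowers (x * z) := by
      refine Subgroup.mem_zpowers_iff.mpr ⟨(e1 : ℤ), ?_⟩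
      rw [zpow_natCast, (hzc x).mul_pow, hxe1, hze1, mul_one]
    have hzmem : z ∈ Subgroup.zpowers (x * z) := by
      refine Subgroup.mem_zpowers_iff.mpr ⟨(e2 : ℤ), ?_⟩
      rw [zpow_natCast, (hzc x).mul_pow, hxe2, hze2, one_mul]
    exact isCyclic_closure_pair_of_mem' (isCyclic_zpowers' (x * z)) hxmem hzmem

/-- Maximal cyclic subgroups. -/
def MaxCyc {G : Type*} [Group G] (M : Subgroup G) : Prop :=
  IsCyclic M ∧ ∀ N : Subgroup G, IsCyclic N → M ≤ N → M = N

lemma exists_maxCyc_mem [Finite G] (g : G) : ∃ M : Subgroup G, MaxCyc M ∧ g ∈ M := by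
  classical
  have hfin : {H : Subgroup G | IsCyclic H ∧ g ∈ H}.Finite := Set.toFinite _
  have hne : {H : Subgroup G | IsCyclic H ∧ g ∈ H}.Nonempty :=
    ⟨Subgroup.zpowers g, isCyclic_zpowers' g, Subgroup.mem_zpowers g⟩
  obtain ⟨M, hM, hmax0⟩ := Set.Finite.exists_maximal hfin hne
  have hmax : ∀ N ∈ {H : Subgroup G | IsCyclic H ∧ g ∈ H}, M ≤ N → M = N :=
    fun N hN hle => le_antisymm hle (hmax0 hN hle)
  exact ⟨M, ⟨hM.1, fun N hN hle => hmax N ⟨hN, hle hM.2⟩ hle⟩, hM.2⟩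

lemma MaxCyc.exists_gen [Nontrivial G] {M : Subgroup G} (hM : MaxCyc M) :
    ∃ x : G, x ≠ 1 ∧ Subgroup.zpowers x = M := by
  obtain ⟨x, hxM, hx⟩ := hM.1.exists_zpowers_eq'
  refine ⟨x, ?_, hx⟩
  rintro rfl
  have hbot : M = ⊥ := by rw [← hx, Subgroup.zpowers_one_eq_bot]
  obtain ⟨g, hg⟩ := exists_ne (1 : G)
  have h1 : M ≤ Subgroup.zpowers g := hbot ▸ bot_le
  have h2 : M = Subgroup.zpowers g := hM.2 _ (isCyclic_zpowers' g) h1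
  have : g ∈ M := h2 ▸ Subgroup.mem_zpowers g
  rw [hbot, Subgroup.mem_bot] at this
  exact hg this

/-- Two subgroups are `r`-linked if they share an element of order `r`. -/
def Linked {G : Type*} [Group G] (r : ℕ) (M N : Subgroup G) : Prop :=
  ∃ z : G, orderOf z = r ∧ z ∈ M ∧ z ∈ N

lemma Linked.symm' {r : ℕ} {M N : Subgroup G} (h : Linked r M N) : Linked r N M := by
  obtain ⟨z, h1, h2, h3⟩ := h; exact ⟨z, h1, h3, h2⟩

lemma linked_trans [Finite G] {r : ℕ} (hr : r.Prime) {A B C : Subgroup G} (hB : IsCyclic B)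
    (h1 : Linked r A B) (h2 : Linked r B C) : Linked r A C := by
  obtain ⟨a, ha, haA, haB⟩ := h1
  obtain ⟨b, hb, hbB, hbC⟩ := h2
  have hm : a ∈ Subgroup.zpowers b := mem_zpowers_of_orderOf_eq_mem hB hr hbB haB hb ha
  exact ⟨a, ha, haA, (Subgroup.zpowers_le.mpr hbC) hm⟩

end Helpers

/-- for a finite non-cyclic `{p,q}`-group, `diam(Δ(G)) = 2` iff `G` has a
unique subgroup of order `p` that is central, or a unique subgroup of order `q` that is
central. -/
theorem diam_eq_two_iff_unique_central_prime_subgroup (G : Type*) [Group G] [Finite G]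
    (p q : ℕ) (hp : p.Prime) (hq : q.Prime) (hpq : p ≠ q)
    (hfac : (Nat.card G).primeFactors = {p, q}) (hnc : ¬ IsCyclic G) :
    (enhancedPowerGraph G).diam = 2 ↔
      ((∃ Z : Subgroup G, Nat.card Z = p ∧ Z ≤ Subgroup.center G ∧
          ∀ X : Subgroup G, Nat.card X = p → X = Z) ∨
        (∃ Z : Subgroup G, Nat.card Z = q ∧ Z ≤ Subgroup.center G ∧
          ∀ X : Subgroup G, Nat.card X = q → X = Z)) := by
  classical
  have hcard0 : Nat.card G ≠ 0 := Nat.card_pos.ne'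
  have hcard1 : Nat.card G ≠ 1 := by
    intro h
    rw [h] at hfac
    have : p ∈ (Nat.primeFactors 1) := by rw [hfac]; simp
    simp at this
  haveI : Nontrivial G := Finite.one_lt_card_iff_nontrivial.mp (by omega)
  -- nonadjacent pair (G noncyclic)
  obtain ⟨x₀, y₀, hxy₀⟩ : ∃ x y : G, ¬ IsCyclic (Subgroup.closure ({x, y} : Set G)) := by
    by_contra h
    push_neg at h
    exact hnc (isCyclic_of_forall_pair' h)
  have hx₀1 : x₀ ≠ 1 := by
    rintro rfl
    exact hxy₀ (isCyclic_closure_pair_of_mem' (isCyclic_zpowers' y₀) (Subgroup.one_mem _)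
      (Subgroup.mem_zpowers y₀))
  have hy₀1 : y₀ ≠ 1 := by
    rintro rfl
    exact hxy₀ (isCyclic_closure_pair_of_mem' (isCyclic_zpowers' x₀)
      (Subgroup.mem_zpowers x₀) (Subgroup.one_mem _))
  have hxy₀ne : x₀ ≠ y₀ := by
    rintro rfl
    exact hxy₀ (isCyclic_closure_pair_of_mem' (isCyclic_zpowers' x₀)
      (Subgroup.mem_zpowers x₀) (Subgroup.mem_zpowers x₀))
  set V := {g : G // g ≠ 1}
  set Γ := enhancedPowerGraph G with hΓ
  have hadj : ∀ u v : V, Γ.Adj u v ↔ u ≠ v ∧ IsCyclic (Subgroup.closure ({u.1, v.1} : Set G)) :=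
    fun u v => Iff.rfl
  set u₀ : V := ⟨x₀, hx₀1⟩
  set v₀ : V := ⟨y₀, hy₀1⟩
  have hu₀v₀ : u₀ ≠ v₀ := fun h => hxy₀ne (congrArg Subtype.val h)
  have hnadj₀ : ¬ Γ.Adj u₀ v₀ := fun h => hxy₀ h.2
  constructor
  · -- diam = 2 → unique central subgroup of order p or q
    intro hdiam
    have hetop : Γ.ediam ≠ ⊤ := by
      intro h
      rw [SimpleGraph.diam, h] at hdiam
      simp at hdiam
    have hediam : Γ.ediam = 2 := by
      have := ENat.coe_toNat hetop
      rw [← this, SimpleGraph.diam] at *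
      rw [hdiam]
      rfl
    have hedle : ∀ u v : V, Γ.edist u v ≤ 2 := by
      intro u v
      rw [← hediam]
      exact SimpleGraph.edist_le_ediam
    -- common-neighbor structure
    have hstruct : ∀ u v : V, u ≠ v → Γ.Adj u v ∨ ∃ w : V, Γ.Adj u w ∧ Γ.Adj w v := by
      intro u v huv
      have hne : Γ.edist u v ≠ ⊤ := by
        intro h
        have := hedle u v
        rw [h] at this
        exact absurd this (by decide)
      obtain ⟨pw, hpw⟩ := (SimpleGraph.reachable_of_edist_ne_top hne).exists_walk_length_eq_edist
      have hplen : pw.length ≤ 2 := by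
        have := hedle u v
        rw [← hpw] at this
        exact_mod_cast this
      cases pw with
      | nil => exact absurd rfl huv
      | cons h pw' =>
        cases pw' with
        | nil => exact Or.inl h
        | cons h' pw'' =>
          cases pw'' with
          | nil => exact Or.inr ⟨_, h, h'⟩
          | cons h'' pw''' => simp [SimpleGraph.Walk.length_cons] at hplen
    -- maximal cyclic subgroups pairwise intersect nontrivially
    have hint : ∀ M N : Subgroup G, MaxCyc M → MaxCyc N →
        ∃ z : G, z ≠ 1 ∧ z ∈ M ∧ z ∈ N := by
      intro M N hM hN
      obtain ⟨x, hx1, hxM⟩ := hM.exists_gen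
      obtain ⟨y, hy1, hyN⟩ := hN.exists_gen
      by_cases hxy : x = y
      · exact ⟨x, hx1, hxM ▸ Subgroup.mem_zpowers x, by
          rw [← hyN, ← hxy]; exact Subgroup.mem_zpowers x⟩
      have huv : (⟨x, hx1⟩ : V) ≠ ⟨y, hy1⟩ := fun h => hxy (congrArg Subtype.val h)
      rcases hstruct ⟨x, hx1⟩ ⟨y, hy1⟩ huv with h | ⟨w, h1, h2⟩
      · -- adjacent: M = closure {x,y} = N
        have hMle : M ≤ Subgroup.closure ({x, y} : Set G) := by
          rw [← hxM]
          exact Subgroup.zpowers_le.mpr (Subgroup.subset_closure (Set.mem_insert _ _))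
        have hNle : N ≤ Subgroup.closure ({x, y} : Set G) := by
          rw [← hyN]
          exact Subgroup.zpowers_le.mpr
            (Subgroup.subset_closure (Set.mem_insert_of_mem _ rfl))
        have hMeq := hM.2 _ h.2 hMle
        have hNeq := hN.2 _ h.2 hNle
        refine ⟨x, hx1, hxM ▸ Subgroup.mem_zpowers x, ?_⟩
        rw [hNeq, ← hMeq]
        exact hxM ▸ Subgroup.mem_zpowers x
      · -- common neighbor w
        have hwM : w.1 ∈ M := by
          have hMle : M ≤ Subgroup.closure ({x, w.1} : Set G) := by
            rw [← hxM]
            exact Subgroup.zpowers_le.mpr (Subgroup.subset_closure (Set.mem_insert _ _))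
          have hMeq := hM.2 _ h1.2 hMle
          rw [hMeq]
          exact Subgroup.subset_closure (Set.mem_insert_of_mem _ rfl)
        have hwN : w.1 ∈ N := by
          have hNle : N ≤ Subgroup.closure ({w.1, y} : Set G) := by
            rw [← hyN]
            exact Subgroup.zpowers_le.mpr
              (Subgroup.subset_closure (Set.mem_insert_of_mem _ rfl))
          have hNeq := hN.2 _ h2.2 hNle
          rw [hNeq]
          exact Subgroup.subset_closure (Set.mem_insert _ _)
        exact ⟨w.1, w.2, hwM, hwN⟩
    -- step 1 : any two maximal cyclics are p-linked or q-linked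
    have step1 : ∀ M N : Subgroup G, MaxCyc M → MaxCyc N →
        Linked p M N ∨ Linked q M N := by
      intro M N hM hN
      obtain ⟨z, hz1, hzM, hzN⟩ := hint M N hM hN
      have hzo1 : orderOf z ≠ 1 := fun h => hz1 (orderOf_eq_one_iff.mp h)
      set r := (orderOf z).minFac with hrdef
      have hrp : r.Prime := Nat.minFac_prime hzo1
      have hrdvd : r ∣ orderOf z := Nat.minFac_dvd _
      have hzo0 : orderOf z ≠ 0 := (orderOf_pos z).ne'
      have hword : orderOf (z ^ (orderOf z / r)) = r := by
        rw [orderOf_pow, Nat.gcd_eq_right (Nat.div_dvd_of_dvd hrdvd),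
          Nat.div_div_self hrdvd hzo0]
      have hrpq : r = p ∨ r = q := by
        have hrdvdG : r ∣ Nat.card G := hrdvd.trans (orderOf_dvd_natCard z)
        have : r ∈ (Nat.card G).primeFactors := Nat.mem_primeFactors.mpr ⟨hrp, hrdvdG, hcard0⟩
        rw [hfac] at this
        simpa using this
      have hlink : Linked r M N :=
        ⟨z ^ (orderOf z / r), hword, Subgroup.pow_mem _ hzM _, Subgroup.pow_mem _ hzN _⟩
      rcases hrpq with rfl | rfl
      · exact Or.inl hlink
      · exact Or.inr hlink
    -- the combinatorial core: some prime r ∈ {p,q} with a common element of order r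
    have hcore : ∃ r : ℕ, r.Prime ∧ (r = p ∨ r = q) ∧
        ∃ z : G, orderOf z = r ∧ ∀ M : Subgroup G, MaxCyc M → z ∈ M := by
      by_cases hP : ∀ M N : Subgroup G, MaxCyc M → MaxCyc N → Linked p M N
      · obtain ⟨M₀, hM₀, _⟩ := exists_maxCyc_mem (1 : G)
        obtain ⟨a, hao, haM₀, _⟩ := hP M₀ M₀ hM₀ hM₀
        refine ⟨p, hp, Or.inl rfl, a, hao, fun N hN => ?_⟩
        obtain ⟨b, hbo, hbM₀, hbN⟩ := hP M₀ N hM₀ hN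
        exact (Subgroup.zpowers_le.mpr hbN)
          (mem_zpowers_of_orderOf_eq_mem hM₀.1 hp hbM₀ haM₀ hbo hao)
      by_cases hQ : ∀ M N : Subgroup G, MaxCyc M → MaxCyc N → Linked q M N
      · obtain ⟨M₀, hM₀, _⟩ := exists_maxCyc_mem (1 : G)
        obtain ⟨a, hao, haM₀, _⟩ := hQ M₀ M₀ hM₀ hM₀
        refine ⟨q, hq, Or.inr rfl, a, hao, fun N hN => ?_⟩
        obtain ⟨b, hbo, hbM₀, hbN⟩ := hQ M₀ N hM₀ hN
        exact (Subgroup.zpowers_le.mpr hbN)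
          (mem_zpowers_of_orderOf_eq_mem hM₀.1 hq hbM₀ haM₀ hbo hao)
      -- contradiction case
      exfalso
      push_neg at hP hQ
      obtain ⟨M1, M2, hM1, hM2, hnp⟩ := hP
      obtain ⟨N1, N2, hN1, hN2, hnq⟩ := hQ
      have m1 : Linked q M1 M2 := (step1 M1 M2 hM1 hM2).resolve_left hnp
      have n1 : Linked p N1 N2 := (step1 N1 N2 hN1 hN2).resolve_right hnq
      rcases step1 M1 N1 hM1 hN1 with hac | hac
      · -- Linked p M1 N1
        have had : Linked p M1 N2 := linked_trans hp hN1.1 hac n1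
        have hbc : Linked q M2 N1 := by
          rcases step1 M2 N1 hM2 hN1 with h | h
          · exact absurd (linked_trans hp hN1.1 hac h.symm') hnp
          · exact h
        have hbd : Linked q M2 N2 := by
          rcases step1 M2 N2 hM2 hN2 with h | h
          · exact absurd (linked_trans hp hN2.1 had h.symm') hnp
          · exact h
        exact hnq (linked_trans hq hM2.1 hbc.symm' hbd)
      · -- Linked q M1 N1
        have hbc : Linked q M2 N1 := linked_trans hq hM1.1 m1.symm' hac
        have had : Linked p M1 N2 := by
          rcases step1 M1 N2 hM1 hN2 with h | h
          · exact h
          · exact absurd (linked_trans hq hM1.1 hac.symm' h) hnq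
        have hbd : Linked p M2 N2 := by
          rcases step1 M2 N2 hM2 hN2 with h | h
          · exact h
          · exact absurd (linked_trans hq hM2.1 hbc.symm' h) hnq
        exact hnp (linked_trans hp hN2.1 had hbd.symm')
    -- assemble the conclusion
    obtain ⟨r, hr, hrpq, z, hzo, hzall⟩ := hcore
    haveI : Fact r.Prime := ⟨hr⟩
    have hz1 : z ≠ 1 := by
      intro h
      rw [h, orderOf_one] at hzo
      exact hr.one_lt.ne' hzo.symm
    -- z is central
    have hzcent : z ∈ Subgroup.center G := by
      rw [Subgroup.mem_center_iff]
      intro g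
      obtain ⟨M, hM, hgM⟩ := exists_maxCyc_mem g
      have hzM := hzall M hM
      haveI := hM.1
      letI : CommGroup M := IsCyclic.commGroup
      have : (⟨g, hgM⟩ : M) * ⟨z, hzM⟩ = ⟨z, hzM⟩ * ⟨g, hgM⟩ := mul_comm _ _
      exact congrArg (Subtype.val : M → G) this
    have hkey : ∀ X : Subgroup G, Nat.card X = r → X = Subgroup.zpowers z := by
      intro X hX
      have hXc : IsCyclic X := isCyclic_of_prime_card hX
      obtain ⟨y, hyX, hy⟩ := hXc.exists_zpowers_eq'
      have hyo : orderOf y = r := by rw [← Nat.card_zpowers, hy, hX]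
      obtain ⟨M, hM, hyM⟩ := exists_maxCyc_mem y
      have hzM := hzall M hM
      have hymem : y ∈ Subgroup.zpowers z :=
        mem_zpowers_of_orderOf_eq_mem hM.1 hr hzM hyM hzo hyo
      have hle : X ≤ Subgroup.zpowers z := by
        rw [← hy]
        exact Subgroup.zpowers_le.mpr hymem
      exact Subgroup.eq_of_le_of_card_ge hle (by rw [hX, Nat.card_zpowers, hzo])
    have hZfact : Nat.card (Subgroup.zpowers z) = r := by rw [Nat.card_zpowers, hzo]
    have hZcent : Subgroup.zpowers z ≤ Subgroup.center G := Subgroup.zpowers_le.mpr hzcent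
    rcases hrpq with rfl | rfl
    · exact Or.inl ⟨Subgroup.zpowers z, hZfact, hZcent, hkey⟩
    · exact Or.inr ⟨Subgroup.zpowers z, hZfact, hZcent, hkey⟩
  · -- unique central subgroup → diam = 2
    intro hyp
    obtain ⟨z, hz1, hzuniv⟩ : ∃ z : G, z ≠ 1 ∧
        ∀ x : G, IsCyclic (Subgroup.closure ({x, z} : Set G)) := by
      rcases hyp with ⟨Z, h1, h2, h3⟩ | ⟨Z, h1, h2, h3⟩
      · exact universal_of_unique_central hp Z h1 h2 h3
      · exact universal_of_unique_central hq Z h1 h2 h3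
    set w : V := ⟨z, hz1⟩
    have hedle : ∀ u v : V, Γ.edist u v ≤ 2 := by
      intro u v
      by_cases huv : u = v
      · simp [huv]
      by_cases hA : Γ.Adj u v
      · rw [SimpleGraph.edist_eq_one_iff_adj.mpr hA]
        norm_num
      have hzu : z ≠ u.1 := by
        intro h
        apply hA
        refine ⟨huv, ?_⟩
        have := hzuniv v.1
        rw [Set.pair_comm] at this
        rwa [h] at this
      have hzv : z ≠ v.1 := by
        intro h
        apply hA
        refine ⟨huv, ?_⟩
        have := hzuniv u.1
        rwa [h] at this
      have h1 : Γ.Adj u w := by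
        refine ⟨fun h => hzu (congrArg Subtype.val h).symm, ?_⟩
        exact hzuniv u.1
      have h2 : Γ.Adj w v := by
        refine ⟨fun h => hzv (congrArg Subtype.val h), ?_⟩
        have := hzuniv v.1
        rwa [Set.pair_comm] at this
      have := SimpleGraph.edist_le
        (SimpleGraph.Walk.cons h1 (SimpleGraph.Walk.cons h2 SimpleGraph.Walk.nil))
      simpa using this
    have hlow : Γ.edist u₀ v₀ = 2 := by
      have hne0 : Γ.edist u₀ v₀ ≠ 0 := fun h => hu₀v₀ (SimpleGraph.edist_eq_zero_iff.mp h)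
      have hne1 : Γ.edist u₀ v₀ ≠ 1 := fun h => hnadj₀ (SimpleGraph.edist_eq_one_iff_adj.mp h)
      have hle := hedle u₀ v₀
      have hnetop : Γ.edist u₀ v₀ ≠ ⊤ := fun h => by rw [h] at hle; exact absurd hle (by decide)
      lift Γ.edist u₀ v₀ to ℕ using hnetop with n hn
      have h2 : n ≤ 2 := by exact_mod_cast hle
      have h0 : n ≠ 0 := fun h => hne0 (by exact_mod_cast congrArg Nat.cast h)
      have h1' : n ≠ 1 := fun h => hne1 (by exact_mod_cast congrArg Nat.cast h)
      have : n = 2 := by omega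
      exact_mod_cast congrArg Nat.cast this
    have hediam : Γ.ediam = 2 := by
      refine le_antisymm (SimpleGraph.ediam_le_of_edist_le hedle) ?_
      rw [← hlow]
      exact SimpleGraph.edist_le_ediam
    rw [SimpleGraph.diam, hediam]
    rfl
end
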